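/- Let Z be the density process of an equivalent σ-martingale measure Q for S with dQ/dP ∈ L^2(P). Then for every ϑ ∈ Θ and every t ∈ [0,T], E[(1 + ∫_t^T ϑ_r dS_r)^2 | F_t] ≥ Z_t^2 / E[Z_T^2 | F_t] P-a.s. -/

import Mathlib

/-!
Since `ϑ·S` is a true `Q`-martingale, Bayes' rule gives `E[Z_T ∫_t^T ϑ dS | F_t] = 0` (this is
`hQmart`, with `Gfrom ϑ t` standing for `∫_t^T ϑ dS`), so `Z_t = E[Z_T (1 + ∫_t^T ϑ dS) | F_t]`.
The bound is then the conditional Cauchy–Schwarz inequality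
`E[Z_T (1 + ∫_t^T ϑ dS) | F_t]² ≤ E[Z_T² | F_t] · E[(1 + ∫_t^T ϑ dS)² | F_t]`.
-/

open MeasureTheory

theorem discrim_le_zero_of_forall_rat {a b c : ℝ} (h : ∀ q : ℚ, 0 ≤ a * (q * q) + b * q + c) :
    discrim a b c ≤ 0 :=
  discrim_le_zero fun x =>
    Rat.denseRange_cast.induction_on x (isClosed_le continuous_const (by fun_prop)) h

section CondExpCauchySchwarz

variable {Ω : Type*} {m m₀ : MeasurableSpace Ω} {μ : Measure Ω} {X Y : Ω → ℝ}

theorem condExp_sub_smul_sq (hX : MemLp X 2 μ) (hY : MemLp Y 2 μ) (c : ℝ) :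
    μ[(X - c • Y) ^ 2 | m] =ᵐ[μ]
      μ[X ^ 2 | m] - (2 * c) • μ[X * Y | m] + c ^ 2 • μ[Y ^ 2 | m] := by
  have hXY : Integrable (X * Y) μ := hX.integrable_mul (q := 2) hY
  have hX2 : Integrable (X ^ 2) μ := hX.integrable_sq
  have hY2 : Integrable (Y ^ 2) μ := hY.integrable_sq
  have hexpand : (X - c • Y) ^ 2 = X ^ 2 - (2 * c) • (X * Y) + c ^ 2 • Y ^ 2 := by
    ext ω; simp only [Pi.pow_apply, Pi.sub_apply, Pi.add_apply, Pi.smul_apply, Pi.mul_apply,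
      smul_eq_mul]; ring
  rw [hexpand]
  filter_upwards [condExp_add (hX2.sub (hXY.smul (2 * c))) (hY2.smul (c ^ 2)) m,
    condExp_sub hX2 (hXY.smul (2 * c)) m, condExp_smul (2 * c) (X * Y) m,
    condExp_smul (c ^ 2) (Y ^ 2) m] with ω hadd hsub hsmulXY hsmulY
  simp only [Pi.add_apply, Pi.sub_apply] at hadd hsub ⊢
  rw [hadd, hsub, hsmulXY, hsmulY]

theorem condExp_mul_sq_le (hX : MemLp X 2 μ) (hY : MemLp Y 2 μ) :
    μ[X * Y | m] ^ 2 ≤ᵐ[μ] μ[X ^ 2 | m] * μ[Y ^ 2 | m] := by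
  -- Only countably many `q`, so the exceptional null sets can be united.
  have hquad : ∀ q : ℚ, ∀ᵐ ω ∂μ,
      0 ≤ μ[Y ^ 2 | m] ω * (q * q) + -(2 * μ[X * Y | m] ω) * q + μ[X ^ 2 | m] ω := by
    intro q
    filter_upwards [condExp_nonneg (m := m) (f := (X - (q : ℝ) • Y) ^ 2)
      (ae_of_all μ fun ω => sq_nonneg ((X - (q : ℝ) • Y) ω)),
      condExp_sub_smul_sq hX hY q] with ω hnonneg hexpand
    rw [hexpand] at hnonneg
    simp only [Pi.zero_apply, Pi.add_apply, Pi.sub_apply, Pi.smul_apply, smul_eq_mul] at hnonneg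
    linarith
  filter_upwards [ae_all_iff.mpr hquad] with ω hω
  have hdiscrim := discrim_le_zero_of_forall_rat hω
  rw [discrim] at hdiscrim
  simp only [Pi.pow_apply, Pi.mul_apply]
  nlinarith

end CondExpCauchySchwarz

theorem conditional_lower_bound_via_density
    {Ω : Type*} {m : MeasurableSpace Ω} (μ : Measure Ω) [IsProbabilityMeasure μ]
    (F : Filtration ℝ m) (T : ℝ)
    (ZT : Ω → ℝ) (hZ2 : MemLp ZT 2 μ)
    (Θ : Type*) (Gfrom : Θ → ℝ → Ω → ℝ)
    (hG2 : ∀ ϑ t, MemLp (Gfrom ϑ t) 2 μ)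
    (hQmart : ∀ (ϑ : Θ) (t : ℝ), 0 ≤ t → t ≤ T →
      μ[fun ω => ZT ω * Gfrom ϑ t ω | F t] =ᵐ[μ] 0) :
    ∀ (ϑ : Θ) (t : ℝ), 0 ≤ t → t ≤ T →
      (fun ω => ((μ[ZT | F t]) ω) ^ 2 / (μ[fun ω' => (ZT ω') ^ 2 | F t]) ω)
        ≤ᵐ[μ] μ[fun ω => (1 + Gfrom ϑ t ω) ^ 2 | F t] := by
  intro ϑ t ht0 htT
  have hwealth : MemLp (1 + Gfrom ϑ t) 2 μ := (memLp_const (1 : ℝ)).add (hG2 ϑ t)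
  have hdensity : μ[ZT * (1 + Gfrom ϑ t) | F t] =ᵐ[μ] μ[ZT | F t] := by
    rw [mul_add, mul_one]
    filter_upwards [condExp_add (hZ2.integrable one_le_two) (hZ2.integrable_mul (q := 2) (hG2 ϑ t))
      (F t), hQmart ϑ t ht0 htT] with ω hadd hzero
    rw [hadd, Pi.add_apply, show μ[ZT * Gfrom ϑ t | F t] ω = 0 from hzero, add_zero]
  filter_upwards [condExp_mul_sq_le (m := F t) hZ2 hwealth, hdensity,
    condExp_nonneg (m := F t) (f := ZT ^ 2) (ae_of_all μ fun ω => sq_nonneg (ZT ω)),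
    condExp_nonneg (m := F t) (f := (1 + Gfrom ϑ t) ^ 2)
      (ae_of_all μ fun ω => sq_nonneg ((1 + Gfrom ϑ t) ω))]
    with ω hcs hZt hZT2 hwealth2
  rw [Pi.pow_apply, hZt] at hcs
  exact div_le_of_le_mul₀ hZT2 hwealth2 (by rw [mul_comm]; exact hcs)
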